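/- Let E be the Darboux–Halphen vector field on ℝ³, let H = 2(x₁∂₁ + x₂∂₂ + x₃∂₃) and F = ∂₁ + ∂₂ + ∂₃. Then the three vector fields satisfy the sl(2,ℝ) commutation relations: [H, E] = 2E, [H, F] = −2F, and [E, F] = H. -/

import Mathlib

/-!
Everything reduces to directional derivatives, since `lieD Z f x = f'(x) (Z x)`. Each component
`Eᵢ` is a homogeneous quadratic, so Euler's identity gives `H(Eᵢ) = 2 · 2Eᵢ`, while `E(Hᵢ) = 2Eᵢ`
because `Hᵢ` is linear. Translating along `(1,1,1)` gives `Eᵢ(x + t𝟙) = Eᵢ(x) - 2t xᵢ - t²`, so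
`F(Eᵢ) = -2xᵢ = -Hᵢ`. The components of `F` are constant, so `H(Fᵢ) = E(Fᵢ) = 0`, and `F(Hᵢ) = 2`.
-/

/-- Partial derivative ∂ᵢf at x of a function on ℝⁿ (modeled as `Fin n → ℝ`). -/
noncomputable def pd {n : ℕ} (f : (Fin n → ℝ) → ℝ) (i : Fin n) (x : Fin n → ℝ) : ℝ :=
  fderiv ℝ f x (Pi.single i 1)

/-- Directional derivative Z(f) = Σⱼ Zⱼ ∂ⱼf of f along the vector field Z. -/
noncomputable def lieD {n : ℕ} (Z : Fin n → (Fin n → ℝ) → ℝ) (f : (Fin n → ℝ) → ℝ)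
    (x : Fin n → ℝ) : ℝ :=
  ∑ j, Z j x * pd f j x

/-- The Darboux–Halphen vector field on ℝ³ (0-indexed coordinates). -/
noncomputable def DH : Fin 3 → (Fin 3 → ℝ) → ℝ :=
  ![fun x => x 1 * x 2 - x 0 * (x 1 + x 2),
    fun x => x 0 * x 2 - x 1 * (x 0 + x 2),
    fun x => x 0 * x 1 - x 2 * (x 0 + x 1)]

/-- The dilation field H = 2Σxⱼ∂ⱼ on ℝ³. -/
noncomputable def Hfield : Fin 3 → (Fin 3 → ℝ) → ℝ := fun j y => 2 * y j

/-- The constant field F = ∂₁ + ∂₂ + ∂₃ on ℝ³. -/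
noncomputable def Ffield : Fin 3 → (Fin 3 → ℝ) → ℝ := fun _ _ => 1

section LineDerivative

variable {E : Type*} [NormedAddCommGroup E] [NormedSpace ℝ E] {f : E → ℝ} {x v : E}

theorem DifferentiableAt.fderiv_apply_eq_of_hasDerivAt {a : ℝ} (hf : DifferentiableAt ℝ f x)
    (h : HasDerivAt (fun t : ℝ => f (x + t • v)) a 0) : fderiv ℝ f x v = a :=
  (hf.hasFDerivAt.hasLineDerivAt v).unique h

theorem DifferentiableAt.fderiv_apply_self_of_homogeneous {k : ℕ} (hf : DifferentiableAt ℝ f x)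
    (hhom : ∀ c : ℝ, f (c • x) = c ^ k * f x) : fderiv ℝ f x x = k * f x := by
  refine hf.fderiv_apply_eq_of_hasDerivAt ?_
  have hline : (fun t : ℝ => f (x + t • x)) = fun t => (1 + t) ^ k * f x := by
    funext t
    rw [← hhom, add_smul, one_smul]
  rw [hline]
  simpa using (((hasDerivAt_id (0 : ℝ)).const_add 1).pow k).mul_const (f x)

end LineDerivative

section LieDerivative

variable {n : ℕ} (Z : Fin n → (Fin n → ℝ) → ℝ) (x : Fin n → ℝ)

theorem lieD_eq_fderiv (f : (Fin n → ℝ) → ℝ) : lieD Z f x = fderiv ℝ f x (fun j => Z j x) := by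
  conv_rhs => rw [← Finset.univ_sum_single (fun j => Z j x)]
  simp only [lieD, pd, map_sum]
  refine Finset.sum_congr rfl fun j _ => ?_
  rw [← smul_eq_mul, ← map_smul, ← Pi.single_smul', smul_eq_mul, mul_one]

theorem lieD_const (c : ℝ) : lieD Z (fun _ => c) x = 0 := by
  simp [lieD, pd]

end LieDerivative

theorem differentiable_DH (i : Fin 3) : Differentiable ℝ (DH i) := by
  fin_cases i <;> simp [DH] <;> fun_prop

theorem DH_smul (i : Fin 3) (c : ℝ) (x : Fin 3 → ℝ) : DH i (c • x) = c ^ 2 * DH i x := by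
  fin_cases i <;> simp [DH] <;> ring

theorem DH_add_smul_one (i : Fin 3) (t : ℝ) (x : Fin 3 → ℝ) :
    DH i (x + t • 1) = DH i x - 2 * x i * t - t ^ 2 := by
  fin_cases i <;> simp [DH] <;> ring

theorem fderiv_DH_apply_self (i : Fin 3) (x : Fin 3 → ℝ) :
    fderiv ℝ (DH i) x x = 2 * DH i x := by
  exact_mod_cast (differentiable_DH i x).fderiv_apply_self_of_homogeneous (DH_smul i · x)

theorem fderiv_DH_apply_one (i : Fin 3) (x : Fin 3 → ℝ) :
    fderiv ℝ (DH i) x 1 = -2 * x i := by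
  refine (differentiable_DH i x).fderiv_apply_eq_of_hasDerivAt ?_
  simp only [DH_add_smul_one]
  refine (((hasDerivAt_const (0 : ℝ) (DH i x)).fun_sub
    ((hasDerivAt_id' 0).const_mul (2 * x i))).fun_sub (hasDerivAt_pow 2 0)).congr_deriv ?_
  norm_num

theorem fderiv_Hfield_apply (i : Fin 3) (x v : Fin 3 → ℝ) :
    fderiv ℝ (Hfield i) x v = 2 * v i := by
  have hlin :
      Hfield i = ⇑((2 : ℝ) • ContinuousLinearMap.proj (R := ℝ) (φ := fun _ : Fin 3 => ℝ) i) := by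
    funext y
    simp [Hfield]
  rw [hlin, ContinuousLinearMap.fderiv]
  simp

/-- The Darboux–Halphen field E together with H = 2Σxⱼ∂ⱼ and F = ∂₁+∂₂+∂₃
satisfies [H,E] = 2E, [H,F] = −2F, [E,F] = H, where [X,Y]ᵢ = X(Yᵢ) − Y(Xᵢ). -/
theorem darboux_halphen_sl2 :
    ∀ (i : Fin 3) (x : Fin 3 → ℝ),
      (lieD Hfield (DH i) x - lieD DH (Hfield i) x = 2 * DH i x) ∧
      (lieD Hfield (Ffield i) x - lieD Ffield (Hfield i) x = -2 * Ffield i x) ∧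
      (lieD DH (Ffield i) x - lieD Ffield (DH i) x = Hfield i x) := by
  intro i x
  have hH : (fun j => Hfield j x) = (2 : ℝ) • x := rfl
  have hF : (fun j => Ffield j x) = 1 := rfl
  have hFi : Ffield i = fun _ => 1 := rfl
  refine ⟨?_, ?_, ?_⟩
  · rw [lieD_eq_fderiv, lieD_eq_fderiv, hH, map_smul, fderiv_DH_apply_self, fderiv_Hfield_apply,
      smul_eq_mul]
    ring
  · rw [hFi, lieD_const, lieD_eq_fderiv, hF, fderiv_Hfield_apply]
    norm_num
  · rw [hFi, lieD_const, lieD_eq_fderiv, hF, fderiv_DH_apply_one, Hfield]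
    ring
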